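/- arXiv:1310.6083 — 2 statements merged into one kernel-verified Lean document; each statement's English description precedes it below -/
import Mathlib

section
/- Let R = ℂ[x₁,x₂,x₃] and let f, φ ∈ R be arbitrary. Then the map β : R × R → R defined by β(g,h) = f · det(Jac(φ,g,h)) is a Poisson bracket on R: it is ℂ-bilinear, antisymmetric, a derivation in each argument, and satisfies the Jacobi identity β(g,β(h,k)) + β(h,β(k,g)) + β(k,β(g,h)) = 0 for all g,h,k ∈ R. -/
noncomputable section

open MvPolynomial

/-- The polynomial ring `R = ℂ[x₁,…,xₙ]`. -/
abbrev PR (n : ℕ) : Type := MvPolynomial (Fin n) ℂ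

/-- `π : B × B → B` is a ℂ-bilinear antisymmetric map which is a derivation in
each argument. -/
def IsBiDerivation {B : Type*} [CommRing B] [Algebra ℂ B] (π : B → B → B) : Prop :=
  (∀ f g, π f g = - π g f) ∧
  (∀ f g h, π (f + g) h = π f h + π g h) ∧
  (∀ f g h, π f (g + h) = π f g + π f h) ∧
  (∀ (c : ℂ) (f g), π (c • f) g = c • π f g) ∧
  (∀ (c : ℂ) (f g), π f (c • g) = c • π f g) ∧
  (∀ f g h, π (f * g) h = f * π g h + g * π f h) ∧
  (∀ f g h, π f (g * h) = g * π f h + h * π f g)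

/-- A Poisson bracket on a commutative ℂ-algebra: a ℂ-bilinear antisymmetric
biderivation satisfying the Jacobi identity. -/
def IsPoissonBracket {B : Type*} [CommRing B] [Algebra ℂ B] (π : B → B → B) : Prop :=
  IsBiDerivation π ∧ ∀ f g h, π f (π g h) + π g (π h f) + π h (π f g) = 0

/-- The determinant of the Jacobian matrix `Jac(φ,g,h)` of three polynomials in
`ℂ[x₁,x₂,x₃]`: the rows are the gradients of `φ`, `g`, `h`. -/
def jacDet (φ g h : PR 3) : PR 3 :=
  (Matrix.of
    ![![MvPolynomial.pderiv 0 φ, MvPolynomial.pderiv 1 φ, MvPolynomial.pderiv 2 φ],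
      ![MvPolynomial.pderiv 0 g, MvPolynomial.pderiv 1 g, MvPolynomial.pderiv 2 g],
      ![MvPolynomial.pderiv 0 h, MvPolynomial.pderiv 1 h, MvPolynomial.pderiv 2 h]]).det

/-- Second partial derivatives of multivariate polynomials commute. -/
lemma pderiv_comm' {σ R : Type*} [CommSemiring R] [DecidableEq σ] (i j : σ)
    (p : MvPolynomial σ R) :
    pderiv i (pderiv j p) = pderiv j (pderiv i p) := by
  induction p using MvPolynomial.induction_on with
  | C a => simp
  | add p q hp hq => simp [hp, hq]
  | mul_X p k hp =>
      simp [pderiv_mul, pderiv_X, Pi.single_apply, hp]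
      split_ifs <;> (try simp only [map_zero]) <;> ring

set_option maxHeartbeats 4000000 in
/-- For any `f, φ ∈ ℂ[x₁,x₂,x₃]`, the bracket
`β(g,h) = f·det(Jac(φ,g,h))` is a Poisson bracket on `ℂ[x₁,x₂,x₃]`. -/
theorem jacobian_bracket_is_poisson (f φ : PR 3) :
    IsPoissonBracket (fun g h : PR 3 => f * jacDet φ g h) := by
  constructor
  · refine ⟨?_, ?_, ?_, ?_, ?_, ?_, ?_⟩ <;> intros <;>
      simp only [jacDet, Matrix.det_fin_three, Matrix.of_apply, Matrix.cons_val',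
        Matrix.cons_val_zero, Matrix.cons_val_one, Matrix.head_cons, Matrix.empty_val',
        Matrix.cons_val_fin_one, Matrix.cons_val_two, Matrix.tail_cons, Matrix.head_fin_const,
        map_add, map_smul, pderiv_mul, smul_eq_C_mul, pderiv_C] <;> ring
  · intro g h k
    simp only [jacDet, Matrix.det_fin_three, Matrix.of_apply, Matrix.cons_val',
      Matrix.cons_val_zero, Matrix.cons_val_one, Matrix.head_cons, Matrix.empty_val',
      Matrix.cons_val_fin_one, Matrix.cons_val_two, Matrix.tail_cons, Matrix.head_fin_const,
      map_add, map_sub, map_mul, pderiv_mul]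
    simp only [pderiv_comm' (1 : Fin 3) 0, pderiv_comm' (2 : Fin 3) 0, pderiv_comm' (2 : Fin 3) 1]
    ring
end
end

section
/- Let R = ℂ[x₁,x₂,x₃] and let φ ∈ R be nonconstant such that the set of common zeros in ℂ³ of ∂φ/∂x₁, ∂φ/∂x₂, ∂φ/∂x₃ is finite. Suppose β ∈ 𝔛^2 is an antisymmetric biderivation of R with β(φ,f) ∈ (φ) for all f ∈ R. Then the biderivation β₀ := d_φ X₃, where X₃ ∈ 𝔛^3 is chosen so that β = d_φ X₃ + φ·X₂ for some X₂ ∈ 𝔛^2, is a Poisson bracket on R (its Jacobiator vanishes identically), β₀ agrees with β modulo (φ), and β₀(φ, f) = 0 for all f ∈ R. -/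
noncomputable section

open MvPolynomial

/-- `P : B^k → B` is a `k`-derivation: an alternating ℂ-multilinear map which is
a derivation (satisfies the Leibniz rule) in each argument.  The `B`-module of
`k`-derivations is `𝔛^k` (with `𝔛^0 = B`). -/
def IsMultiDeriv {B : Type*} [CommRing B] [Algebra ℂ B] (k : ℕ) (P : (Fin k → B) → B) : Prop :=
  (∀ (v : Fin k → B) (i : Fin k) (g h : B),
      P (Function.update v i (g + h)) = P (Function.update v i g) + P (Function.update v i h)) ∧
  (∀ (v : Fin k → B) (i : Fin k) (c : ℂ) (g : B),
      P (Function.update v i (c • g)) = c • P (Function.update v i g)) ∧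
  (∀ (v : Fin k → B) (i j : Fin k), i ≠ j → v i = v j → P v = 0) ∧
  (∀ (v : Fin k → B) (i : Fin k) (g h : B),
      P (Function.update v i (g * h)) = g * P (Function.update v i h) + h * P (Function.update v i g))

/-- The Koszul differential `d_φ : 𝔛^{k+1} → 𝔛^k`, contraction with `dφ`:
`(d_φ P)(f₁,…,f_k) = P(φ, f₁,…,f_k)`. -/
def dphi {n k : ℕ} (φ : PR n) (P : (Fin (k + 1) → PR n) → PR n) :
    (Fin k → PR n) → PR n :=
  fun v => P (Fin.cons φ v)

/-!
Write `β(g, h) = b ⬝ (∇g × ∇h)` with `b = (β(x₂,x₃), β(x₃,x₁), β(x₁,x₂))`. The hypothesis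
on `β(φ, ·)` says `b × ∇φ ≡ 0 mod φ`. Since the critical locus of `φ` is finite, the
Nullstellensatz puts monic polynomials `uⱼ(xⱼ)` into the Jacobian ideal `(∂₁φ, ∂₂φ, ∂₃φ)`;
in distinct variables they form a regular sequence, so the Koszul complex of `∇φ` is exact
in degrees 1 and 2, which gives `b = f ∇φ + φ E`. Thus `β = d_φ X₃ + φ X₂` with
`X₃ = f · det(∇, ∇, ∇)` and `X₂ = E ⬝ (∇ × ∇)`, and `d_φ X₃` is the Jacobian bracket
`f · det(∇φ, ∇g, ∇h)`. Its Jacobiator is a derivation in each argument, so it suffices to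
check it at `(x₁, x₂, x₃)`, where it vanishes because second partial derivatives commute.
-/

open Matrix

namespace MvPolynomial

variable {σ R : Type*} [CommRing R]

def grad (g : MvPolynomial σ R) : σ → MvPolynomial σ R := fun i => pderiv i g

@[simp] lemma grad_apply (g : MvPolynomial σ R) (i : σ) : grad g i = pderiv i g := rfl

lemma grad_add (g h : MvPolynomial σ R) : grad (g + h) = grad g + grad h := by
  ext1 i; simp

lemma grad_smul (c : R) (g : MvPolynomial σ R) : grad (c • g) = c • grad g := by
  ext1 i; simp

lemma grad_mul (g h : MvPolynomial σ R) : grad (g * h) = g • grad h + h • grad g := by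
  ext1 i; simp

lemma grad_X [DecidableEq σ] (i : σ) : grad (X i : MvPolynomial σ R) = Pi.single i 1 := by
  ext1 j; simp [pderiv_X, Pi.single_apply, eq_comm]

lemma pderiv_pderiv_comm (i j : σ) (g : MvPolynomial σ R) :
    pderiv i (pderiv j g) = pderiv j (pderiv i g) := by
  classical
  have h : ⁅pderiv i, pderiv j⁆ = (0 : Derivation R (MvPolynomial σ R) (MvPolynomial σ R)) :=
    derivation_ext fun k => by
      rw [Derivation.commutator_apply]; simp [pderiv_X, Pi.single_apply, apply_ite]
  have := congr($h g)
  rwa [Derivation.commutator_apply, Derivation.zero_apply, sub_eq_zero] at this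

lemma eq_sum_pderiv_mul_of_leibniz [Fintype σ] (d : MvPolynomial σ R → MvPolynomial σ R)
    (hadd : ∀ g h, d (g + h) = d g + d h) (hsmul : ∀ (c : R) g, d (c • g) = c • d g)
    (hmul : ∀ g h, d (g * h) = g * d h + h * d g) (g : MvPolynomial σ R) :
    d g = ∑ i, pderiv i g * d (X i) := by
  classical
  let D : Derivation R (MvPolynomial σ R) (MvPolynomial σ R) :=
    Derivation.mk' ⟨⟨d, hadd⟩, hsmul⟩ hmul
  have sum_apply (g : MvPolynomial σ R) :
      (∑ i, d (X i) • pderiv i) g = ∑ i, pderiv i g * d (X i) := by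
    rw [← Derivation.coeFnAddMonoidHom_apply, map_sum, Finset.sum_apply]
    simp [mul_comm]
  have hD : D = ∑ i, d (X i) • pderiv i :=
    derivation_ext fun k => by simp [sum_apply, D, pderiv_X, Pi.single_apply]
  rw [← sum_apply, ← hD]
  rfl

end MvPolynomial

section Biderivation

variable {B : Type*} [CommRing B]

def jacobiator (π : B → B → B) (f g h : B) : B :=
  π f (π g h) + π g (π h f) + π h (π f g)

lemma jacobiator_cycle (π : B → B → B) (f g h : B) :
    jacobiator π f g h = jacobiator π g h f := by
  simp only [jacobiator]; ring

variable [Algebra ℂ B]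

lemma IsMultiDeriv.isBiDerivation {β : (Fin 2 → B) → B} (hβ : IsMultiDeriv 2 β) :
    IsBiDerivation fun f g => β ![f, g] := by
  obtain ⟨hadd, hsmul, halt, hmul⟩ := hβ
  have update_zero (f g x : B) : Function.update ![f, g] 0 x = ![x, g] := by
    ext i; fin_cases i <;> simp
  have update_one (f g x : B) : Function.update ![f, g] 1 x = ![f, x] := by
    ext i; fin_cases i <;> simp
  have add_left f f' g : β ![f + f', g] = β ![f, g] + β ![f', g] := by
    simpa [update_zero] using hadd ![0, g] 0 f f'
  have add_right f g g' : β ![f, g + g'] = β ![f, g] + β ![f, g'] := by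
    simpa [update_one] using hadd ![f, 0] 1 g g'
  have self f : β ![f, f] = 0 := halt ![f, f] 0 1 (by decide) rfl
  refine ⟨fun f g => ?_, add_left, add_right, fun c f g => ?_, fun c f g => ?_,
    fun f f' g => ?_, fun f g g' => ?_⟩
  · have h := self (f + g)
    rw [add_left, add_right, add_right, self, self] at h
    linear_combination h
  · simpa [update_zero] using hsmul ![0, g] 0 c f
  · simpa [update_one] using hsmul ![f, 0] 1 c g
  · simpa [update_zero] using hmul ![0, g] 0 f f'
  · simpa [update_one] using hmul ![f, 0] 1 g g'

namespace IsBiDerivation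

variable {π : B → B → B} (hπ : IsBiDerivation π)
include hπ

lemma map_neg_right (f g : B) : π f (-g) = -π f g :=
  (AddMonoidHom.mk' (π f) (hπ.2.2.1 f)).map_neg g

lemma jacobiator_swap (f g h : B) : jacobiator π g f h = -jacobiator π f g h := by
  simp only [jacobiator]
  rw [hπ.1 g h, hπ.1 h f, hπ.1 f g, hπ.map_neg_right, hπ.map_neg_right, hπ.map_neg_right]
  ring

lemma jacobiator_self (f h : B) : jacobiator π f f h = 0 := by
  have h2 : (2 : ℂ) • jacobiator π f f h = 0 := by
    rw [two_smul]; nth_rewrite 2 [← neg_neg (jacobiator π f f h)]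
    rw [← hπ.jacobiator_swap, add_neg_cancel]
  exact (smul_eq_zero.1 h2).resolve_left two_ne_zero

lemma jacobiator_add_left (f f' g h : B) :
    jacobiator π (f + f') g h = jacobiator π f g h + jacobiator π f' g h := by
  obtain ⟨-, add_left, add_right, -⟩ := hπ
  simp only [jacobiator, add_left, add_right]; ring

lemma jacobiator_smul_left (c : ℂ) (f g h : B) :
    jacobiator π (c • f) g h = c • jacobiator π f g h := by
  obtain ⟨-, -, -, smul_left, smul_right, -⟩ := hπ
  simp only [jacobiator, smul_left, smul_right, smul_add]

lemma jacobiator_mul_left (f f' g h : B) :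
    jacobiator π (f * f') g h = f * jacobiator π f' g h + f' * jacobiator π f g h := by
  obtain ⟨anti, -, add_right, -, -, mul_left, mul_right⟩ := hπ
  simp only [jacobiator, mul_left, mul_right, add_right]
  linear_combination π h f' * anti f g + π h f * anti f' g

end IsBiDerivation

end Biderivation

namespace IsBiDerivation

lemma eq_of_X {σ : Type*} [Fintype σ]
    {π π' : MvPolynomial σ ℂ → MvPolynomial σ ℂ → MvPolynomial σ ℂ}
    (hπ : IsBiDerivation π) (hπ' : IsBiDerivation π')
    (h : ∀ i j, π (X i) (X j) = π' (X i) (X j)) (f g : MvPolynomial σ ℂ) : π f g = π' f g := by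
  have expand (π) (hπ : IsBiDerivation π) :
      π f g = ∑ i, pderiv i f * ∑ j, pderiv j g * π (X i) (X j) := by
    obtain ⟨-, add_left, add_right, smul_left, smul_right, mul_left, mul_right⟩ := hπ
    rw [eq_sum_pderiv_mul_of_leibniz (π · g) (add_left · · g) (smul_left · · g) (mul_left · · g)]
    refine Finset.sum_congr rfl fun i _ => ?_
    rw [eq_sum_pderiv_mul_of_leibniz (π (X i)) (add_right _) (smul_right · _) (mul_right _)]
  rw [expand π hπ, expand π' hπ']
  simp only [h]

lemma jacobiator_eq_zero_of_X {σ : Type*} [Fintype σ]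
    {π : MvPolynomial σ ℂ → MvPolynomial σ ℂ → MvPolynomial σ ℂ}
    (hπ : IsBiDerivation π) (hX : ∀ a b c, jacobiator π (X a) (X b) (X c) = 0)
    (f g h : MvPolynomial σ ℂ) : jacobiator π f g h = 0 := by
  have of_X (g h) (hXgh : ∀ i, jacobiator π (X i) g h = 0) f : jacobiator π f g h = 0 := by
    rw [eq_sum_pderiv_mul_of_leibniz (jacobiator π · g h) (hπ.jacobiator_add_left · · g h)
      (hπ.jacobiator_smul_left · · g h) (hπ.jacobiator_mul_left · · g h)]
    simp [hXgh]
  refine of_X g h (fun i => ?_) f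
  rw [jacobiator_cycle]
  refine of_X h (X i) (fun j => ?_) g
  rw [jacobiator_cycle]
  exact of_X (X i) (X j) (fun k => hX k i j) h

lemma jacobiator_eq_zero_of_X₀₁₂ {π : PR 3 → PR 3 → PR 3} (hπ : IsBiDerivation π)
    (h₀₁₂ : jacobiator π (X 0) (X 1) (X 2) = 0) (f g h : PR 3) : jacobiator π f g h = 0 := by
  refine hπ.jacobiator_eq_zero_of_X (fun a b c => ?_) f g h
  fin_cases a <;> fin_cases b <;> fin_cases c <;>
    simp only [Fin.zero_eta, Fin.mk_one, Fin.reduceFinMk] <;>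
    first
    | rw [hπ.jacobiator_self]
    | rw [jacobiator_cycle, hπ.jacobiator_self]
    | rw [← jacobiator_cycle, hπ.jacobiator_self]
    | rw [h₀₁₂]
    | rw [jacobiator_cycle, h₀₁₂]
    | rw [← jacobiator_cycle, h₀₁₂]
    | rw [hπ.jacobiator_swap, h₀₁₂, neg_zero]
    | rw [jacobiator_cycle, hπ.jacobiator_swap, h₀₁₂, neg_zero]
    | rw [← jacobiator_cycle, hπ.jacobiator_swap, h₀₁₂, neg_zero]

end IsBiDerivation

section JacobianDeterminant

variable {σ : Type*} {k : ℕ}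

lemma isMultiDeriv_comp_grad
    (M : (σ → MvPolynomial σ ℂ) [⋀^Fin k]→ₗ[MvPolynomial σ ℂ] MvPolynomial σ ℂ) :
    IsMultiDeriv k fun v => M (grad ∘ v) := by
  refine ⟨fun v i g h => ?_, fun v i c g => ?_, fun v i j hij hv => ?_, fun v i g h => ?_⟩
  · simp only [Function.comp_update, grad_add, M.map_update_add]
  · dsimp only
    rw [Function.comp_update, Function.comp_update, grad_smul,
      ← algebraMap_smul (MvPolynomial σ ℂ), M.map_update_smul, algebraMap_smul]
  · exact M.map_eq_zero_of_eq _ (by simp [hv]) hij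
  · simp only [Function.comp_update, grad_mul, M.map_update_add, M.map_update_smul,
      smul_eq_mul]

lemma dphi_comp_grad {n : ℕ} (φ : PR n)
    (M : (Fin n → PR n) [⋀^Fin (k + 1)]→ₗ[PR n] PR n) :
    dphi φ (fun v => M (grad ∘ v)) = fun v => M.curryLeft (grad φ) (grad ∘ v) := by
  funext v
  rw [dphi, Fin.comp_cons, AlternatingMap.curryLeft_apply_apply]
  rfl

end JacobianDeterminant

lemma curryLeft_detRowAlternating_apply {A : Type*} [CommRing A] (u : Fin 3 → A)
    (v : Fin 2 → Fin 3 → A) : detRowAlternating.curryLeft u v = u ⬝ᵥ v 0 ⨯₃ v 1 := by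
  rw [AlternatingMap.curryLeft_apply_apply, triple_product_eq_det]
  congr
  ext i : 1
  fin_cases i <;> rfl

lemma dotProduct_cross_single {A : Type*} [CommRing A] (u v : Fin 3 → A) (k : Fin 3) :
    u ⬝ᵥ v ⨯₃ Pi.single k 1 = (u ⨯₃ v) k := by
  rw [triple_product_permutation, triple_product_permutation, single_one_dotProduct]

def biderivationVector (β : (Fin 2 → PR 3) → PR 3) : Fin 3 → PR 3 :=
  ![β ![X 1, X 2], β ![X 2, X 0], β ![X 0, X 1]]

lemma IsMultiDeriv.apply_eq_dotProduct_cross {β : (Fin 2 → PR 3) → PR 3}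
    (hβ : IsMultiDeriv 2 β) (v : Fin 2 → PR 3) :
    β v = biderivationVector β ⬝ᵥ grad (v 0) ⨯₃ grad (v 1) := by
  have hv : v = ![v 0, v 1] := by ext i; fin_cases i <;> rfl
  have hdet := (isMultiDeriv_comp_grad
    (detRowAlternating.curryLeft (biderivationVector β))).isBiDerivation
  simp only [Function.comp_def, curryLeft_detRowAlternating_apply] at hdet
  rw [hv]
  refine hβ.isBiDerivation.eq_of_X hdet (fun i j => ?_) (v 0) (v 1)
  have self (f : PR 3) : β ![f, f] = 0 := hβ.2.2.1 _ 0 1 (by decide) rfl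
  have anti (f g : PR 3) : β ![f, g] = -β ![g, f] := hβ.isBiDerivation.1 f g
  fin_cases i <;> fin_cases j <;>
    simp [biderivationVector, grad_X, cross_apply, self, anti (X 1) (X 0), anti (X 2) (X 1),
      anti (X 0) (X 2)]

def jacobianBracket (f φ g h : PR 3) : PR 3 :=
  f * grad φ ⬝ᵥ grad g ⨯₃ grad h

lemma smul_detRowAlternating_curryLeft_apply {A : Type*} [CommRing A] (f : A) (u : Fin 3 → A)
    (v : Fin 2 → Fin 3 → A) :
    (f • detRowAlternating).curryLeft u v = f * u ⬝ᵥ v 0 ⨯₃ v 1 := by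
  rw [AlternatingMap.curryLeft_apply_apply, AlternatingMap.smul_apply, smul_eq_mul,
    ← AlternatingMap.curryLeft_apply_apply, curryLeft_detRowAlternating_apply]

lemma dphi_smul_det_comp_grad (f φ : PR 3) (v : Fin 2 → PR 3) :
    dphi φ (fun w => (f • detRowAlternating) (grad ∘ w)) v = jacobianBracket f φ (v 0) (v 1) := by
  rw [dphi_comp_grad]
  exact smul_detRowAlternating_curryLeft_apply f (grad φ) (grad ∘ v)

lemma jacobiator_jacobianBracket_X₀₁₂ (f φ : PR 3) :
    jacobiator (jacobianBracket f φ) (X 0) (X 1) (X 2) = 0 := by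
  have h₁₀ := pderiv_pderiv_comm 1 0 φ
  have h₂₀ := pderiv_pderiv_comm 2 0 φ
  have h₂₁ := pderiv_pderiv_comm 2 1 φ
  simp only [jacobiator, jacobianBracket, grad_X, cross_apply, Pi.single_eq_same, ne_eq,
    Fin.reduceEq, not_false_eq_true, Pi.single_eq_of_ne, dotProduct_cons, vecHead, grad_apply,
    vecTail, Function.comp_apply, Fin.succ_zero_eq_one, Fin.succ_one_eq_two, dotProduct_of_isEmpty,
    Derivation.leibniz, smul_eq_mul, mul_one, mul_zero, zero_mul, one_mul, sub_zero, zero_sub,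
    sub_self, add_zero, zero_add, h₁₀, h₂₀, h₂₁]
  ring

lemma isPoissonBracket_jacobianBracket (f φ : PR 3) :
    IsPoissonBracket (jacobianBracket f φ) := by
  have hπ := (isMultiDeriv_comp_grad ((f • detRowAlternating).curryLeft (grad φ))).isBiDerivation
  simp only [smul_detRowAlternating_curryLeft_apply] at hπ
  exact ⟨hπ, hπ.jacobiator_eq_zero_of_X₀₁₂ (jacobiator_jacobianBracket_X₀₁₂ f φ)⟩

section Koszul

variable {A : Type*} [CommRing A] {p : Fin 3 → A} {g₁ g₂ g₃ : A}
  (hg₁ : g₁ ∈ Ideal.span (Set.range p)) (hg₂ : g₂ ∈ Ideal.span (Set.range p))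
  (hg₃ : g₃ ∈ Ideal.span (Set.range p))
  (hreg₂ : ∀ h, g₂ * h ∈ Ideal.span {g₁} → h ∈ Ideal.span {g₁})
  (hreg₃ : ∀ h, g₃ * h ∈ Ideal.span {g₁, g₂} → h ∈ Ideal.span {g₁, g₂})

include hg₃ hreg₃ in
lemma mem_span_pair_of_forall_mul_mem {r : A} (hr : ∀ i, r * p i ∈ Ideal.span {g₁, g₂}) :
    r ∈ Ideal.span {g₁, g₂} := by
  obtain ⟨c, hc⟩ := Ideal.mem_span_range_iff_exists_fun.1 hg₃
  refine hreg₃ r ?_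
  rw [← hc, Finset.sum_mul]
  exact Ideal.sum_mem _ fun i _ => by
    rw [mul_assoc, mul_comm (p i)]; exact Ideal.mul_mem_left _ _ (hr i)

include hg₂ hg₃ hreg₂ hreg₃ in
lemma exists_eq_smul_add_smul_of_cross_eq_smul {a D : Fin 3 → A} (h : a ⨯₃ p = g₁ • D) :
    ∃ (r : A) (a' : Fin 3 → A), a = r • p + g₁ • a' := by
  obtain ⟨c, hc : c ⬝ᵥ p = g₂⟩ := Ideal.mem_span_range_iff_exists_fun.1 hg₂
  have key : ∀ i, g₂ * a i - a ⬝ᵥ c * p i = g₁ * (c ⨯₃ D) i := fun i => by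
    simpa using congr_fun (show g₂ • a - (a ⬝ᵥ c) • p = g₁ • c ⨯₃ D by
      rw [← hc, ← cross_cross_eq_smul_sub_smul', h, map_smul]) i
  have hr : a ⬝ᵥ c ∈ Ideal.span {g₁, g₂} := by
    refine mem_span_pair_of_forall_mul_mem hg₃ hreg₃ fun i => ?_
    rw [show a ⬝ᵥ c * p i = g₂ * a i - g₁ * (c ⨯₃ D) i by linear_combination -key i]
    exact Ideal.sub_mem _ (Ideal.mul_mem_right _ _ (Ideal.subset_span (by simp)))
      (Ideal.mul_mem_right _ _ (Ideal.subset_span (by simp)))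
  obtain ⟨r₁, r₂, hr⟩ := Ideal.mem_span_pair.1 hr
  have hmod (i : Fin 3) : ∃ a'ᵢ, a'ᵢ * g₁ = a i - r₂ * p i := by
    refine Ideal.mem_span_singleton'.1 (hreg₂ _ ?_)
    rw [show g₂ * (a i - r₂ * p i) = ((c ⨯₃ D) i + r₁ * p i) * g₁ by
      linear_combination key i - p i * hr]
    exact Ideal.mul_mem_left _ _ (Ideal.mem_span_singleton_self g₁)
  choose a' ha' using hmod
  refine ⟨r₂, a', funext fun i => ?_⟩
  simp only [Pi.add_apply, Pi.smul_apply, smul_eq_mul]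
  linear_combination -(ha' i)

variable [IsDomain A] (hg₁_ne : g₁ ≠ 0)

include hg₁ hg₂ hg₃ hreg₂ hreg₃ hg₁_ne in
lemma exists_eq_cross_of_dotProduct_eq_zero {t : Fin 3 → A} (ht : p ⬝ᵥ t = 0) :
    ∃ E, t = E ⨯₃ p := by
  obtain ⟨c, hc : c ⬝ᵥ p = g₁⟩ := Ideal.mem_span_range_iff_exists_fun.1 hg₁
  have hct : c ⨯₃ t ⨯₃ p = g₁ • t := by
    rw [cross_cross_eq_smul_sub_smul, hc, dotProduct_comm t, ht, zero_smul, sub_zero]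
  obtain ⟨r, a', ha'⟩ := exists_eq_smul_add_smul_of_cross_eq_smul hg₂ hg₃ hreg₂ hreg₃ hct
  refine ⟨a', smul_right_injective _ hg₁_ne ?_⟩
  simp only
  rw [← hct, ha', map_add, map_smul, map_smul, LinearMap.add_apply, LinearMap.smul_apply,
    LinearMap.smul_apply, cross_self, smul_zero, zero_add]

include hg₁ hg₂ hreg₂ hg₁_ne in
lemma exists_eq_smul_of_cross_eq_zero {b : Fin 3 → A} (hb : b ⨯₃ p = 0) :
    ∃ f : A, b = f • p := by
  obtain ⟨c₁, hc₁ : c₁ ⬝ᵥ p = g₁⟩ := Ideal.mem_span_range_iff_exists_fun.1 hg₁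
  obtain ⟨c₂, hc₂ : c₂ ⬝ᵥ p = g₂⟩ := Ideal.mem_span_range_iff_exists_fun.1 hg₂
  have h₁ : g₁ • b = (b ⬝ᵥ c₁) • p := by
    rw [← sub_eq_zero, ← hc₁, ← cross_cross_eq_smul_sub_smul', hb, map_zero]
  obtain ⟨f, hf⟩ := Ideal.mem_span_singleton'.1 (hreg₂ (b ⬝ᵥ c₁) (by
    rw [← hc₂, mul_comm, ← smul_eq_mul, ← dotProduct_smul, ← h₁, dotProduct_smul, smul_eq_mul]
    exact Ideal.mul_mem_right _ _ (Ideal.mem_span_singleton_self g₁)))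
  refine ⟨f, smul_right_injective _ hg₁_ne ?_⟩
  simp only
  rw [h₁, ← hf, mul_comm, mul_smul]

include hg₁ hg₂ hg₃ hreg₂ hreg₃ hg₁_ne in
lemma exists_eq_smul_add_smul_of_cross_mem_span {φ : A} (hφ : φ ≠ 0) {b : Fin 3 → A}
    (hb : ∀ k, (b ⨯₃ p) k ∈ Ideal.span {φ}) :
    ∃ (f : A) (E : Fin 3 → A), b = f • p + φ • E := by
  choose t ht using fun k => Ideal.mem_span_singleton'.1 (hb k)
  have hbt : b ⨯₃ p = φ • t := funext fun k => by simp [← ht k, mul_comm]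
  have hpt : p ⬝ᵥ t = 0 := by
    refine (mul_eq_zero.1 ?_).resolve_left hφ
    rw [← smul_eq_mul, ← dotProduct_smul, ← hbt, dot_cross_self]
  obtain ⟨E, rfl⟩ :=
    exists_eq_cross_of_dotProduct_eq_zero hg₁ hg₂ hg₃ hreg₂ hreg₃ hg₁_ne hpt
  obtain ⟨f, hf⟩ := exists_eq_smul_of_cross_eq_zero hg₁ hg₂ hreg₂ hg₁_ne (b := b - φ • E)
    (by rw [map_sub, map_smul, LinearMap.sub_apply, LinearMap.smul_apply, hbt, sub_self])
  exact ⟨f, E, by rw [← hf, sub_add_cancel]⟩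

end Koszul

lemma Polynomial.Monic.mem_map_C_of_mul_mem {S : Type*} [CommRing S] {u h : Polynomial S}
    (hu : u.Monic) {J : Ideal S} (hm : u * h ∈ J.map Polynomial.C) :
    h ∈ J.map Polynomial.C := by
  rw [← Ideal.mk_ker (I := J), ← Polynomial.ker_mapRingHom, RingHom.mem_ker] at hm ⊢
  rw [map_mul, ← mul_zero (Polynomial.mapRingHom _ u)] at hm
  exact (hu.map (Ideal.Quotient.mk J)).isRegular.left hm

namespace MvPolynomial

variable {σ R : Type*} [CommRing R]

lemma aeval_X_mem_range_rename {a b : σ} (hb : b ≠ a) (w : Polynomial R) :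
    Polynomial.aeval (X b : MvPolynomial σ R) w ∈
      Set.range (rename (Subtype.val : {c // c ≠ a} → σ)) :=
  ⟨Polynomial.aeval (X ⟨b, hb⟩) w, by rw [← Polynomial.aeval_algHom_apply, rename_X]⟩

/-- Over the variables other than `X a`, `s` generates an ideal `J`, and `Ideal.span s`
corresponds to `J[X]`; a monic polynomial is a non-zero-divisor modulo `J[X]`. -/
lemma mem_span_of_aeval_X_mul_mem (a : σ) {u : Polynomial R} (hu : u.Monic)
    {s : Set (MvPolynomial σ R)}
    (hs : s ⊆ Set.range (rename (Subtype.val : {b // b ≠ a} → σ)))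
    {h : MvPolynomial σ R} (hm : Polynomial.aeval (X a) u * h ∈ Ideal.span s) :
    h ∈ Ideal.span s := by
  classical
  obtain ⟨s, rfl⟩ : ∃ s', s = rename Subtype.val '' s' :=
    ⟨_, (Set.image_preimage_eq_of_subset hs).symm⟩
  let e : MvPolynomial σ R ≃ₐ[R] Polynomial (MvPolynomial {b // b ≠ a} R) :=
    (renameEquiv R (Equiv.optionSubtypeNe a).symm).trans (optionEquivLeft R _)
  have he_aeval : e (Polynomial.aeval (X a) u) = u.map (algebraMap R _) := by
    rw [← Polynomial.aeval_algHom_apply,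
      ← Polynomial.aeval_map_algebraMap (MvPolynomial {b // b ≠ a} R),
      ← Polynomial.aeval_X_left_apply (u.map _)]
    simp [e, optionEquivLeft_X_none]
  have he_rename (q : MvPolynomial {b // b ≠ a} R) :
      e (rename Subtype.val q) = Polynomial.C q := by
    induction q using MvPolynomial.induction_on with
    | C r => simp [e]
    | add p q hp hq => simp_all
    | mul_X p b hp =>
      simp_all [e, Equiv.optionSubtypeNe_symm_of_ne b.2, optionEquivLeft_X_some]
  have hmap : (Ideal.span (rename Subtype.val '' s)).map e.toRingEquiv
      = (Ideal.span s).map Polynomial.C := by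
    rw [Ideal.map_span, Ideal.map_span, Set.image_image]
    exact congr_arg _ (Set.image_congr fun q _ => he_rename q)
  rw [← Ideal.apply_mem_of_equiv_iff (f := e.toRingEquiv), hmap] at hm ⊢
  rw [map_mul] at hm
  exact (hu.map _).mem_map_C_of_mul_mem (by rwa [← he_aeval])

lemma exists_monic_aeval_X_mem_of_finite_zeroLocus {σ k : Type*} [Finite σ] [Field k]
    [IsAlgClosed k] {I : Ideal (MvPolynomial σ k)} (hI : (zeroLocus k I).Finite) (j : σ) :
    ∃ u : Polynomial k, u.Monic ∧ Polynomial.aeval (X j) u ∈ I := by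
  let q : Polynomial k := ∏ x ∈ hI.toFinset, (Polynomial.X - Polynomial.C (x j))
  have hq : Polynomial.aeval (X j) q ∈ vanishingIdeal k (zeroLocus k I) := fun x hx => by
    rw [← Polynomial.aeval_algHom_apply, aeval_X, Polynomial.aeval_def,
      Polynomial.eval₂_finsetProd]
    exact Finset.prod_eq_zero (hI.mem_toFinset.2 hx) (by simp)
  rw [vanishingIdeal_zeroLocus_eq_radical] at hq
  obtain ⟨n, hn⟩ := hq
  exact ⟨q ^ n, (Polynomial.monic_prod_of_monic _ _ fun x _ => Polynomial.monic_X_sub_C _).pow n,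
    by rwa [map_pow]⟩

lemma exists_regular_triple_of_finite_zeroLocus {k : Type*} [Field k] [IsAlgClosed k]
    {I : Ideal (MvPolynomial (Fin 3) k)} (hI : (zeroLocus k I).Finite) :
    ∃ g₁ g₂ g₃, g₁ ∈ I ∧ g₂ ∈ I ∧ g₃ ∈ I ∧ g₁ ≠ 0 ∧
      (∀ h, g₂ * h ∈ Ideal.span {g₁} → h ∈ Ideal.span {g₁}) ∧
      (∀ h, g₃ * h ∈ Ideal.span {g₁, g₂} → h ∈ Ideal.span {g₁, g₂}) := by
  obtain ⟨u₀, hu₀, hg₃⟩ := exists_monic_aeval_X_mem_of_finite_zeroLocus hI 0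
  obtain ⟨u₁, hu₁, hg₂⟩ := exists_monic_aeval_X_mem_of_finite_zeroLocus hI 1
  obtain ⟨u₂, hu₂, hg₁⟩ := exists_monic_aeval_X_mem_of_finite_zeroLocus hI 2
  refine ⟨_, _, _, hg₁, hg₂, hg₃, ?_, fun h => mem_span_of_aeval_X_mul_mem 1 hu₁ ?_,
    fun h => mem_span_of_aeval_X_mul_mem 0 hu₀ ?_⟩
  · exact (map_ne_zero_iff _ (Polynomial.toMvPolynomial_injective 2)).2 hu₂.ne_zero
  · simpa using aeval_X_mem_range_rename (by decide) u₂
  · simpa [Set.insert_subset_iff] using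
      ⟨aeval_X_mem_range_rename (by decide) u₂, aeval_X_mem_range_rename (by decide) u₁⟩

end MvPolynomial

lemma exists_biderivationVector_eq_smul_grad_add_smul {φ : PR 3}
    (hfin : Set.Finite {x : Fin 3 → ℂ | ∀ i, eval x (pderiv i φ) = 0})
    {β : (Fin 2 → PR 3) → PR 3} (hβ : IsMultiDeriv 2 β)
    (hβφ : ∀ f, β ![φ, f] ∈ Ideal.span {φ}) :
    ∃ (f : PR 3) (E : Fin 3 → PR 3), biderivationVector β = f • grad φ + φ • E := by
  have hφ : φ ≠ 0 := by
    rintro rfl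
    exact Set.infinite_univ (by simpa using hfin)
  obtain ⟨g₁, g₂, g₃, hg₁, hg₂, hg₃, hg₁_ne, hreg₂, hreg₃⟩ :=
    exists_regular_triple_of_finite_zeroLocus (I := Ideal.span (Set.range (grad φ)))
      (by simpa [zeroLocus_span] using hfin)
  refine exists_eq_smul_add_smul_of_cross_mem_span hg₁ hg₂ hg₃ hreg₂ hreg₃ hg₁_ne hφ fun k => ?_
  simpa [hβ.apply_eq_dotProduct_cross, grad_X, dotProduct_cross_single] using hβφ (X k)

theorem dim3_extension_is_poisson_general (φ : PR 3)
    (hfin : Set.Finite {x : Fin 3 → ℂ | ∀ i : Fin 3,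
      MvPolynomial.eval x (MvPolynomial.pderiv i φ) = 0})
    (β : (Fin 2 → PR 3) → PR 3) (hβ : IsMultiDeriv 2 β)
    (hβφ : ∀ f : PR 3, β ![φ, f] ∈ Ideal.span {φ}) :
    ∃ (X₂ : (Fin 2 → PR 3) → PR 3) (X₃ : (Fin 3 → PR 3) → PR 3),
      IsMultiDeriv 2 X₂ ∧ IsMultiDeriv 3 X₃ ∧
      (∀ v : Fin 2 → PR 3, β v = dphi φ X₃ v + φ * X₂ v) ∧
      IsMultiDeriv 2 (dphi φ X₃) ∧
      (∀ f g h : PR 3,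
        dphi φ X₃ ![f, dphi φ X₃ ![g, h]]
          + dphi φ X₃ ![g, dphi φ X₃ ![h, f]]
          + dphi φ X₃ ![h, dphi φ X₃ ![f, g]] = 0) ∧
      (∀ v : Fin 2 → PR 3, β v - dphi φ X₃ v ∈ Ideal.span {φ}) ∧
      (∀ f : PR 3, dphi φ X₃ ![φ, f] = 0) := by
  obtain ⟨f, E, hb⟩ := exists_biderivationVector_eq_smul_grad_add_smul hfin hβ hβφ
  let X₃ : (Fin 3 → PR 3) → PR 3 := fun v => (f • detRowAlternating) (grad ∘ v)
  let X₂ : (Fin 2 → PR 3) → PR 3 := fun v => detRowAlternating.curryLeft E (grad ∘ v)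
  have hX₃ : IsMultiDeriv 3 X₃ := isMultiDeriv_comp_grad _
  have hbracket (v : Fin 2 → PR 3) : dphi φ X₃ v = jacobianBracket f φ (v 0) (v 1) :=
    dphi_smul_det_comp_grad f φ v
  have hX₂ (v : Fin 2 → PR 3) : X₂ v = E ⬝ᵥ grad (v 0) ⨯₃ grad (v 1) :=
    curryLeft_detRowAlternating_apply E _
  have hsplit (v : Fin 2 → PR 3) : β v = dphi φ X₃ v + φ * X₂ v := by
    rw [hβ.apply_eq_dotProduct_cross, hb, hbracket, jacobianBracket, hX₂, add_dotProduct,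
      smul_dotProduct, smul_dotProduct, smul_eq_mul, smul_eq_mul]
  refine ⟨X₂, X₃, isMultiDeriv_comp_grad _, hX₃, hsplit, ?_, fun g h k => ?_, fun v => ?_,
    fun g => hX₃.2.2.1 _ 0 1 (by decide) rfl⟩
  · rw [dphi_comp_grad]
    exact isMultiDeriv_comp_grad _
  · simp only [hbracket, Matrix.cons_val_zero, Matrix.cons_val_one]
    exact (isPoissonBracket_jacobianBracket f φ).2 g h k
  · rw [hsplit, add_sub_cancel_left]
    exact Ideal.mul_mem_right _ _ (Ideal.mem_span_singleton_self φ)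

/-- For a nonconstant `φ ∈ ℂ[x₁,x₂,x₃]` whose partial
derivatives have finitely many common zeros, and an antisymmetric biderivation
`β ∈ 𝔛²` with `β(φ,·)` `(φ)`-valued, there are `X₂ ∈ 𝔛²`, `X₃ ∈ 𝔛³` with
`β = d_φ X₃ + φ·X₂`, and `β₀ := d_φ X₃` is a Poisson bracket on `R` (a
biderivation with identically vanishing Jacobiator) which agrees with `β`
modulo `(φ)` and satisfies `β₀(φ,f) = 0` for all `f`. -/
theorem dim3_extension_is_poisson (φ : PR 3)
    (hφ : ∀ c : ℂ, φ ≠ MvPolynomial.C c)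
    (hfin : Set.Finite {x : Fin 3 → ℂ | ∀ i : Fin 3,
      MvPolynomial.eval x (MvPolynomial.pderiv i φ) = 0})
    (β : (Fin 2 → PR 3) → PR 3) (hβ : IsMultiDeriv 2 β)
    (hβφ : ∀ f : PR 3, β ![φ, f] ∈ Ideal.span {φ}) :
    ∃ (X₂ : (Fin 2 → PR 3) → PR 3) (X₃ : (Fin 3 → PR 3) → PR 3),
      IsMultiDeriv 2 X₂ ∧ IsMultiDeriv 3 X₃ ∧
      (∀ v : Fin 2 → PR 3, β v = dphi φ X₃ v + φ * X₂ v) ∧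
      IsMultiDeriv 2 (dphi φ X₃) ∧
      (∀ f g h : PR 3,
        dphi φ X₃ ![f, dphi φ X₃ ![g, h]]
          + dphi φ X₃ ![g, dphi φ X₃ ![h, f]]
          + dphi φ X₃ ![h, dphi φ X₃ ![f, g]] = 0) ∧
      (∀ v : Fin 2 → PR 3, β v - dphi φ X₃ v ∈ Ideal.span {φ}) ∧
      (∀ f : PR 3, dphi φ X₃ ![φ, f] = 0) :=
  dim3_extension_is_poisson_general φ hfin β hβ hβφ
end
end
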